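/- Let f : ℝ^d → ℝ be L-smooth and G ∈ ℝ^{d×k} with orthonormal columns. For u uniform on √k · S^{k-1}, define Δ = (f(x+λGu) − f(x−λGu))/(2λ). Then E_u[Δ²] ≤ (L²λ²k²)/2 + 2‖Gᵀ∇f(x)‖² ≤ (L²λ²k²)/2 + 2‖∇f(x)‖². -/

import Mathlib

/-!
Write `y = Σ uᵢ Gᵢ`, so that `‖y‖ = ‖u‖ = √k`. Applying the quadratic upper bound of an
`L`-smooth function at `x ± λy` gives `Δ = ⟪∇f(x), y⟫ + e` with `|e| ≤ Lλk/2`, hence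
`Δ² ≤ 2⟪∇f(x), y⟫² + L²λ²k²/2`. Moreover `⟪∇f(x), y⟫ = ⟪Gᵀ∇f(x), u⟫`, and rotation invariance
makes `u` isotropic: `E⟪a, u⟫² = ‖a‖²` (all unit vectors are exchanged by reflections, and the
`k` coordinate second moments add up to `E‖u‖² = k`). Bessel's inequality gives the last step.
-/

open MeasureTheory

noncomputable section

/-- `μ` is the uniform distribution on the sphere of radius `r` in `ℝ^n`. -/
def IsUniformSphere {n : ℕ} (μ : Measure (EuclideanSpace ℝ (Fin n))) (r : ℝ) : Prop :=
  IsProbabilityMeasure μ ∧ (∀ᵐ u ∂μ, ‖u‖ = r) ∧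
    ∀ O : EuclideanSpace ℝ (Fin n) ≃ₗᵢ[ℝ] EuclideanSpace ℝ (Fin n), μ.map O = μ

open Set
open scoped RealInnerProductSpace

theorem sq_le_of_abs_sub_le {t s e : ℝ} (h : |t - s| ≤ e) : t ^ 2 ≤ 2 * s ^ 2 + 2 * e ^ 2 := by
  have he : (t - s) ^ 2 ≤ e ^ 2 := sq_le_sq' (abs_le.1 h).1 (abs_le.1 h).2
  nlinarith [add_sq_le (a := s) (b := t - s)]

section Smooth

variable {E : Type*} [NormedAddCommGroup E] [InnerProductSpace ℝ E] [CompleteSpace E]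
  {f : E → ℝ} {L : ℝ}

theorem abs_sub_sub_inner_gradient_le (hf : Differentiable ℝ f)
    (hL : ∀ x y, ‖gradient f x - gradient f y‖ ≤ L * ‖x - y‖) (x h : E) :
    |f (x + h) - f x - ⟪gradient f x, h⟫| ≤ L / 2 * ‖h‖ ^ 2 := by
  have hderiv : ∀ t : ℝ, HasDerivAt (fun t : ℝ => f (x + t • h) - f x - t * ⟪gradient f x, h⟫)
      (⟪gradient f (x + t • h) - gradient f x, h⟫) t := by
    intro t
    have hline : HasDerivAt (fun t : ℝ => x + t • h) h t := by
      simpa using ((hasDerivAt_id t).smul_const h).const_add x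
    have hcomp : HasDerivAt (fun t : ℝ => f (x + t • h)) ⟪gradient f (x + t • h), h⟫ t := by
      simpa [Function.comp_def] using
        (hf (x + t • h)).hasGradientAt.hasFDerivAt.comp_hasDerivAt t hline
    rw [inner_sub_left]
    exact (hcomp.sub_const (f x)).sub (hasDerivAt_mul_const _)
  have hbound : ∀ t ∈ Ico (0 : ℝ) 1,
      ‖⟪gradient f (x + t • h) - gradient f x, h⟫‖ ≤ L * ‖h‖ ^ 2 * t := by
    rintro t ⟨ht, -⟩
    calc ‖⟪gradient f (x + t • h) - gradient f x, h⟫‖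
        ≤ ‖gradient f (x + t • h) - gradient f x‖ * ‖h‖ := norm_inner_le_norm _ _
      _ ≤ L * ‖x + t • h - x‖ * ‖h‖ := by gcongr; exact hL _ _
      _ = L * ‖h‖ ^ 2 * t := by
        rw [add_sub_cancel_left, norm_smul, Real.norm_of_nonneg ht]; ring
  have hB : ∀ t : ℝ, HasDerivAt (fun t : ℝ => L / 2 * ‖h‖ ^ 2 * t ^ 2) (L * ‖h‖ ^ 2 * t) t := by
    intro t
    exact ((hasDerivAt_pow 2 t).const_mul (L / 2 * ‖h‖ ^ 2)).congr_deriv (by ring)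
  have := image_norm_le_of_norm_deriv_right_le_deriv_boundary
    (fun t _ => (hderiv t).continuousAt.continuousWithinAt)
    (fun t _ => (hderiv t).hasDerivWithinAt) (by simp) hB hbound (right_mem_Icc.2 zero_le_one)
  simpa using this

theorem abs_sub_sub_two_inner_gradient_le (hf : Differentiable ℝ f)
    (hL : ∀ x y, ‖gradient f x - gradient f y‖ ≤ L * ‖x - y‖) (x h : E) :
    |f (x + h) - f (x - h) - 2 * ⟪gradient f x, h⟫| ≤ L * ‖h‖ ^ 2 := by
  have hplus := abs_sub_sub_inner_gradient_le hf hL x h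
  have hminus := abs_sub_sub_inner_gradient_le hf hL x (-h)
  rw [← sub_eq_add_neg, norm_neg, inner_neg_right] at hminus
  calc |f (x + h) - f (x - h) - 2 * ⟪gradient f x, h⟫|
      = |(f (x + h) - f x - ⟪gradient f x, h⟫) - (f (x - h) - f x - -⟪gradient f x, h⟫)| := by
        ring_nf
    _ ≤ L / 2 * ‖h‖ ^ 2 + L / 2 * ‖h‖ ^ 2 := (abs_sub _ _).trans (add_le_add hplus hminus)
    _ = L * ‖h‖ ^ 2 := by ring

theorem sq_centered_difference_quotient_le (hf : Differentiable ℝ f)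
    (hL : ∀ x y, ‖gradient f x - gradient f y‖ ≤ L * ‖x - y‖) {lam : ℝ} (hlam : 0 < lam)
    (x h : E) :
    ((f (x + lam • h) - f (x - lam • h)) / (2 * lam)) ^ 2
      ≤ L ^ 2 * lam ^ 2 * ‖h‖ ^ 4 / 2 + 2 * ⟪gradient f x, h⟫ ^ 2 := by
  have hdiff := abs_sub_sub_two_inner_gradient_le hf hL x (lam • h)
  rw [inner_smul_right, norm_smul, Real.norm_of_nonneg hlam.le] at hdiff
  have hquot : |(f (x + lam • h) - f (x - lam • h)) / (2 * lam) - ⟪gradient f x, h⟫|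
      ≤ L * lam * ‖h‖ ^ 2 / 2 := by
    rw [show (f (x + lam • h) - f (x - lam • h)) / (2 * lam) - ⟪gradient f x, h⟫
        = (f (x + lam • h) - f (x - lam • h) - 2 * (lam * ⟪gradient f x, h⟫)) / (2 * lam) by
          field_simp,
      abs_div, abs_of_pos (by positivity : (0 : ℝ) < 2 * lam), div_le_iff₀ (by positivity)]
    linarith
  linarith [sq_le_of_abs_sub_le hquot]

end Smooth

theorem integral_inner_sq_eq_of_norm_eq {E : Type*} [NormedAddCommGroup E] [InnerProductSpace ℝ E]
    [MeasurableSpace E] [BorelSpace E] {μ : Measure E} (hμ : ∀ O : E ≃ₗᵢ[ℝ] E, μ.map O = μ)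
    {v w : E} (h : ‖v‖ = ‖w‖) :
    ∫ u, ⟪v, u⟫ ^ 2 ∂μ = ∫ u, ⟪w, u⟫ ^ 2 ∂μ := by
  set R := (ℝ ∙ (v - w))ᗮ.reflection
  have hinner : ∀ u, ⟪v, R u⟫ = ⟪w, u⟫ := fun u => by
    rw [← R.inner_map_map, Submodule.reflection_sub h, Submodule.reflection_reflection]
  calc ∫ u, ⟪v, u⟫ ^ 2 ∂μ = ∫ u, ⟪v, R u⟫ ^ 2 ∂μ := by
        conv_lhs => rw [← hμ R]
        exact integral_map_equiv R.toHomeomorph.toMeasurableEquiv _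
    _ = ∫ u, ⟪w, u⟫ ^ 2 ∂μ := by simp only [hinner]

namespace IsUniformSphere

variable {n : ℕ} {μ : Measure (EuclideanSpace ℝ (Fin n))} {r : ℝ}

theorem integrable_inner_sq (hμ : IsUniformSphere μ r) (a : EuclideanSpace ℝ (Fin n)) :
    Integrable (fun u => ⟪a, u⟫ ^ 2) μ := by
  have : IsProbabilityMeasure μ := hμ.1
  refine Integrable.mono' (integrable_const (‖a‖ ^ 2 * r ^ 2))
    ((continuous_const.inner continuous_id).pow 2).aestronglyMeasurable ?_
  filter_upwards [hμ.2.1] with u hu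
  rw [Real.norm_of_nonneg (sq_nonneg _), ← hu, ← mul_pow, ← sq_abs]
  gcongr
  exact abs_real_inner_le_norm a u

theorem integral_inner_sq (hμ : IsUniformSphere μ r) (a : EuclideanSpace ℝ (Fin n)) :
    ∫ u, ⟪a, u⟫ ^ 2 ∂μ = ‖a‖ ^ 2 * r ^ 2 / n := by
  rcases Nat.eq_zero_or_pos n with rfl | hn
  · simp [Subsingleton.elim a 0]
  have : IsProbabilityMeasure μ := hμ.1
  set e : Fin n → EuclideanSpace ℝ (Fin n) := fun j => EuclideanSpace.single j 1
  have hscale : ∀ v : EuclideanSpace ℝ (Fin n),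
      ∫ u, ⟪v, u⟫ ^ 2 ∂μ = ‖v‖ ^ 2 * ∫ u, ⟪e ⟨0, hn⟩, u⟫ ^ 2 ∂μ := fun v => by
    rw [integral_inner_sq_eq_of_norm_eq hμ.2.2 (w := ‖v‖ • e ⟨0, hn⟩) (by simp [e, norm_smul]),
      ← integral_const_mul]
    simp only [real_inner_smul_left, mul_pow]
  have hparseval : ∑ j, ∫ u, ⟪e j, u⟫ ^ 2 ∂μ = r ^ 2 := by
    rw [← integral_finsetSum _ fun j _ => hμ.integrable_inner_sq (e j),
      integral_congr_ae (g := fun _ => r ^ 2)]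
    · simp
    filter_upwards [hμ.2.1] with u hu
    simp [e, EuclideanSpace.inner_single_left, ← hu, EuclideanSpace.real_norm_sq_eq]
  have hcoord : ∀ j, ∫ u, ⟪e j, u⟫ ^ 2 ∂μ = ∫ u, ⟪e ⟨0, hn⟩, u⟫ ^ 2 ∂μ := fun j => by
    rw [hscale]; simp [e]
  have hn' : (n : ℝ) ≠ 0 := by positivity
  rw [hscale a, eq_div_iff hn', ← hparseval, Finset.sum_congr rfl fun j _ => hcoord j,
    Finset.sum_const, Finset.card_univ, Fintype.card_fin, nsmul_eq_mul]
  ring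

theorem integral_inner_sq_of_radius_sqrt (hμ : IsUniformSphere μ (Real.sqrt n))
    (a : EuclideanSpace ℝ (Fin n)) : ∫ u, ⟪a, u⟫ ^ 2 ∂μ = ‖a‖ ^ 2 := by
  rw [hμ.integral_inner_sq, Real.sq_sqrt n.cast_nonneg]
  rcases Nat.eq_zero_or_pos n with rfl | hn
  · simp [Subsingleton.elim a 0]
  · field_simp

end IsUniformSphere

section Orthonormal

variable {ι E : Type*} [Fintype ι] [NormedAddCommGroup E] [InnerProductSpace ℝ E]

theorem Orthonormal.norm_sum_smul {G : ι → E} (hG : Orthonormal ℝ G) (u : EuclideanSpace ℝ ι) :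
    ‖∑ i, u i • G i‖ = ‖u‖ := by
  rw [← sq_eq_sq₀ (norm_nonneg _) (norm_nonneg _), ← real_inner_self_eq_norm_sq,
    hG.inner_sum, EuclideanSpace.real_norm_sq_eq]
  simp [sq]

theorem inner_sum_smul_eq_inner_toLp (G : ι → E) (g : E) (u : EuclideanSpace ℝ ι) :
    ⟪g, ∑ i, u i • G i⟫ = ⟪WithLp.toLp 2 fun i => ⟪G i, g⟫, u⟫ := by
  simp [inner_sum, real_inner_smul_right, PiLp.inner_apply, real_inner_comm, mul_comm]

end Orthonormal

/-- For `L`-smooth `f`, orthonormal-column `G`, and `u` uniform on the sphere of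
radius `√k`, with `Δ = (f(x+λGu) − f(x−λGu))/(2λ)`:
`E[Δ²] ≤ L²λ²k²/2 + 2‖Gᵀ∇f(x)‖² ≤ L²λ²k²/2 + 2‖∇f(x)‖²`. -/
theorem subspace_estimator_second_moment (d k : ℕ) (L lam : ℝ) (hlam : 0 < lam)
    (f : EuclideanSpace ℝ (Fin d) → ℝ) (hf : Differentiable ℝ f)
    (hL : ∀ x y, ‖gradient f x - gradient f y‖ ≤ L * ‖x - y‖)
    (G : Fin k → EuclideanSpace ℝ (Fin d)) (hG : Orthonormal ℝ G)
    (μ : Measure (EuclideanSpace ℝ (Fin k)))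
    (hμ : IsUniformSphere μ (Real.sqrt k))
    (x : EuclideanSpace ℝ (Fin d)) :
    (∫ u, ((f (x + lam • ∑ i, u i • G i) - f (x - lam • ∑ i, u i • G i))
          / (2 * lam)) ^ 2 ∂μ)
        ≤ L ^ 2 * lam ^ 2 * (k : ℝ) ^ 2 / 2
            + 2 * ∑ i, (inner ℝ (G i) (gradient f x) : ℝ) ^ 2 ∧
    L ^ 2 * lam ^ 2 * (k : ℝ) ^ 2 / 2 + 2 * ∑ i, (inner ℝ (G i) (gradient f x) : ℝ) ^ 2
        ≤ L ^ 2 * lam ^ 2 * (k : ℝ) ^ 2 / 2 + 2 * ‖gradient f x‖ ^ 2 := by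
  have : IsProbabilityMeasure μ := hμ.1
  set a : EuclideanSpace ℝ (Fin k) := WithLp.toLp 2 fun i => ⟪G i, gradient f x⟫
  have hnorm_a : ‖a‖ ^ 2 = ∑ i, ⟪G i, gradient f x⟫ ^ 2 := EuclideanSpace.real_norm_sq_eq a
  have hbessel : ∑ i, ⟪G i, gradient f x⟫ ^ 2 ≤ ‖gradient f x‖ ^ 2 := by
    simpa [sq_abs] using hG.sum_inner_products_le (gradient f x) (s := Finset.univ)
  have hpointwise : ∀ᵐ u ∂μ,
      ((f (x + lam • ∑ i, u i • G i) - f (x - lam • ∑ i, u i • G i)) / (2 * lam)) ^ 2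
        ≤ L ^ 2 * lam ^ 2 * (k : ℝ) ^ 2 / 2 + 2 * ⟪a, u⟫ ^ 2 := by
    filter_upwards [hμ.2.1] with u hu
    have hk : Real.sqrt k ^ 4 = (k : ℝ) ^ 2 := by
      rw [show 4 = 2 * 2 by rfl, pow_mul, Real.sq_sqrt k.cast_nonneg]
    simpa only [hG.norm_sum_smul, hu, hk, inner_sum_smul_eq_inner_toLp] using
      sq_centered_difference_quotient_le hf hL hlam x (∑ i, u i • G i)
  refine ⟨?_, by linarith⟩
  calc _ ≤ ∫ u, (L ^ 2 * lam ^ 2 * (k : ℝ) ^ 2 / 2 + 2 * ⟪a, u⟫ ^ 2) ∂μ :=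
        integral_mono_of_nonneg (ae_of_all _ fun _ => sq_nonneg _)
          ((integrable_const _).add ((hμ.integrable_inner_sq a).const_mul 2)) hpointwise
    _ = L ^ 2 * lam ^ 2 * (k : ℝ) ^ 2 / 2 + 2 * ‖a‖ ^ 2 := by
        rw [integral_add (integrable_const _) ((hμ.integrable_inner_sq a).const_mul 2),
          integral_const, integral_const_mul, hμ.integral_inner_sq_of_radius_sqrt]
        simp
    _ = _ := by rw [hnorm_a]
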